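/- (SubRiemannian Schur theorem) Let M be a connected sRC-manifold such that HM bracket generates TM, dim HM = d > 2, and VM is normal and integrable. If there is a smooth function λ on M with Rc(X,Y) = λ⟨X,Y⟩ for all horizontal vectors X, Y, then λ is constant. -/

import Mathlib

/-- Abstract model of the calculus of smooth vector fields on a manifold:
`F` plays the role of the ring of smooth functions, `V` the space of vector
fields, `D` the derivation action of vector fields on functions, `bracket`
the Lie bracket and `g` a Riemannian metric. -/
structure VFCalc (F : Type*) (V : Type*) [CommRing F] [Algebra ℝ F]
    [AddCommGroup V] [Module F V] where
  D : V → F → F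
  D_add : ∀ X f h, D X (f + h) = D X f + D X h
  D_mul : ∀ X f h, D X (f * h) = f * D X h + h * D X f
  D_addX : ∀ X Y f, D (X + Y) f = D X f + D Y f
  D_smulX : ∀ (f : F) (X : V) (h : F), D (f • X) h = f * D X h
  bracket : V → V → V
  bracket_antisymm : ∀ X Y, bracket X Y = -bracket Y X
  bracket_addl : ∀ X Y Z, bracket (X + Y) Z = bracket X Z + bracket Y Z
  bracket_leibniz : ∀ (X : V) (f : F) (Y : V),
    bracket X (f • Y) = f • bracket X Y + (D X f) • Y
  jacobi : ∀ X Y Z,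
    bracket X (bracket Y Z) + bracket Y (bracket Z X) + bracket Z (bracket X Y) = 0
  D_bracket : ∀ X Y f, D (bracket X Y) f = D X (D Y f) - D Y (D X f)
  g : V → V → F
  g_symm : ∀ X Y, g X Y = g Y X
  g_addl : ∀ X Y Z, g (X + Y) Z = g X Z + g Y Z
  g_smull : ∀ (f : F) (X Y : V), g (f • X) Y = f * g X Y

namespace VFCalc

variable {F : Type*} {V : Type*} [CommRing F] [Algebra ℝ F]
  [AddCommGroup V] [Module F V]

/-- `nab` is an affine connection on vector fields. -/
structure IsConnection (S : VFCalc F V) (nab : V → V → V) : Prop where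
  addX : ∀ X Y Z, nab (X + Y) Z = nab X Z + nab Y Z
  smulX : ∀ (f : F) (X Y : V), nab (f • X) Y = f • nab X Y
  addY : ∀ X Y Z, nab X (Y + Z) = nab X Y + nab X Z
  leibniz : ∀ (X : V) (f : F) (Y : V), nab X (f • Y) = f • nab X Y + (S.D X f) • Y

/-- The torsion `Tor(X,Y) = ∇_X Y - ∇_Y X - [X,Y]` of a connection. -/
def tor (S : VFCalc F V) (nab : V → V → V) (X Y : V) : V :=
  nab X Y - nab Y X - S.bracket X Y

/-- The curvature operator `R(X,Y)Z = ∇_X ∇_Y Z - ∇_Y ∇_X Z - ∇_{[X,Y]} Z`. -/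
def curv (S : VFCalc F V) (nab : V → V → V) (X Y Z : V) : V :=
  nab X (nab Y Z) - nab Y (nab X Z) - nab (S.bracket X Y) Z

/-- The (4,0) curvature tensor `Rm(A,B,C,D) = ⟨R(A,B)C, D⟩`. -/
def Rm (S : VFCalc F V) (nab : V → V → V) (A B C D : V) : F :=
  S.g (curv S nab A B C) D

/-- Metric compatibility of a connection: `∇ g = 0`. -/
def MetricCompat (S : VFCalc F V) (nab : V → V → V) : Prop :=
  ∀ X Y Z, S.D X (S.g Y Z) = S.g (nab X Y) Z + S.g Y (nab X Z)

/-- The covariant derivative of the torsion: `(∇_X Tor)(Y,Z)`. -/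
def nabTor (S : VFCalc F V) (nab : V → V → V) (X Y Z : V) : V :=
  nab X (tor S nab Y Z) - tor S nab (nab X Y) Z - tor S nab Y (nab X Z)

end VFCalc
/-- An sRC decomposition `TM = HM ⊕ VM`, recorded via the two orthogonal
projections `H` (horizontal) and `Vp` (vertical). -/
structure TwoGrading {F : Type*} {V : Type*} [CommRing F] [Algebra ℝ F]
    [AddCommGroup V] [Module F V] (S : VFCalc F V) where
  H : V → V
  Vp : V → V
  H_add : ∀ X Y, H (X + Y) = H X + H Y
  H_smul : ∀ (f : F) (X : V), H (f • X) = f • H X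
  Vp_add : ∀ X Y, Vp (X + Y) = Vp X + Vp Y
  Vp_smul : ∀ (f : F) (X : V), Vp (f • X) = f • Vp X
  sum_eq : ∀ X, H X + Vp X = X
  H_H : ∀ X, H (H X) = H X
  H_Vp : ∀ X, H (Vp X) = 0
  orth : ∀ X Y, S.g (H X) (Vp Y) = 0

namespace VFCalc

variable {F : Type*} {V : Type*} [CommRing F] [Algebra ℝ F]
  [AddCommGroup V] [Module F V]

/-- `nab` is the canonical (basic) connection of the sRC-manifold: metric
compatible, `HM` and `VM` parallel, `Tor(HM,HM) ⊆ VM`, `Tor(VM,VM) ⊆ HM`,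
and the torsion symmetries. -/
structure IsCanonical (S : VFCalc F V) (G : TwoGrading S) (nab : V → V → V) : Prop where
  conn : IsConnection S nab
  metric : MetricCompat S nab
  parH : ∀ X Y, nab X (G.H Y) = G.H (nab X Y)
  torHH : ∀ X Y, G.H (tor S nab (G.H X) (G.H Y)) = 0
  torVV : ∀ X Y, G.Vp (tor S nab (G.Vp X) (G.Vp Y)) = 0
  torSymH : ∀ X Z T, S.g (tor S nab (G.H X) (G.Vp T)) (G.H Z)
      = S.g (tor S nab (G.H Z) (G.Vp T)) (G.H X)
  torSymV : ∀ X Z T, S.g (tor S nab (G.Vp X) (G.H T)) (G.Vp Z)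
      = S.g (tor S nab (G.Vp Z) (G.H T)) (G.Vp X)

/-- Normality of the vertical complement: the tensor
`B(X,Y,T) = T⟨X,Y⟩ + ⟨[X,T],Y⟩ + ⟨[Y,T],X⟩` vanishes for horizontal `X,Y`
and vertical `T`. -/
def NormalV (S : VFCalc F V) (G : TwoGrading S) : Prop :=
  ∀ X Y T, G.H X = X → G.H Y = Y → G.Vp T = T →
    S.D T (S.g X Y) + S.g (S.bracket X T) Y + S.g (S.bracket Y T) X = 0

/-- `1`-normality (for the basic grading): the tensor `B⁽¹⁾` vanishes,
i.e. `T⟨X,Y⟩ + ⟨[X,T],Y⟩ + ⟨[Y,T],X⟩ = 0` for vertical `X,Y` and horizontal `T`. -/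
def NormalH (S : VFCalc F V) (G : TwoGrading S) : Prop :=
  ∀ X Y T, G.Vp X = X → G.Vp Y = Y → G.H T = T →
    S.D T (S.g X Y) + S.g (S.bracket X T) Y + S.g (S.bracket Y T) X = 0

/-- Integrability of the vertical bundle: `[VM,VM] ⊆ VM`. -/
def IntegrableV (S : VFCalc F V) (G : TwoGrading S) : Prop :=
  ∀ X Y, G.H (S.bracket (G.Vp X) (G.Vp Y)) = 0

/-- A (global) horizontal orthonormal frame. -/
def IsHFrame (S : VFCalc F V) (G : TwoGrading S) {d : ℕ} (E : Fin d → V) : Prop :=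
  (∀ i, G.H (E i) = E i) ∧ (∀ i j, S.g (E i) (E j) = if i = j then 1 else 0) ∧
    (∀ X, G.H X = X → X = ∑ i, S.g X (E i) • E i)

/-- A (global) vertical orthonormal frame. -/
def IsVFrame (S : VFCalc F V) (G : TwoGrading S) {m : ℕ} (U : Fin m → V) : Prop :=
  (∀ a, G.Vp (U a) = U a) ∧ (∀ a b, S.g (U a) (U b) = if a = b then 1 else 0) ∧
    (∀ X, G.Vp X = X → X = ∑ a, S.g X (U a) • U a)

/-- The subRiemannian Ricci curvature `Rc(A,B) = Σ_k Rm(A,E_k,E_k,B)`. -/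
def Ric (S : VFCalc F V) (nab : V → V → V) {d : ℕ} (E : Fin d → V) (A B : V) : F :=
  ∑ k, Rm S nab A (E k) (E k) B

end VFCalc


section SchurAux

open VFCalc Finset

variable {F : Type*} {V : Type*} [CommRing F] [Algebra ℝ F]
  [AddCommGroup V] [Module F V]
variable (S : VFCalc F V) (G : TwoGrading S) (nab : V → V → V)

private def Dh (X : V) : F →+ F := AddMonoidHom.mk' (S.D X) (S.D_add X)

lemma sD_zero (X : V) : S.D X (0 : F) = 0 := map_zero (Dh S X)

lemma sD_sum {ι : Type*} (s : Finset ι) (f : ι → F) (X : V) :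
    S.D X (∑ i ∈ s, f i) = ∑ i ∈ s, S.D X (f i) := map_sum (Dh S X) f s

lemma sD_nsmul (X : V) (n : ℕ) (f : F) : S.D X (n • f) = n • S.D X f :=
  map_nsmul (Dh S X) n f

lemma sD_one (X : V) : S.D X (1 : F) = 0 := by
  have h := S.D_mul X 1 1
  simp only [one_mul, mul_one] at h
  exact left_eq_add.mp h

lemma g_addr (X Y Z : V) : S.g X (Y + Z) = S.g X Y + S.g X Z := by
  rw [S.g_symm, S.g_addl, S.g_symm Y X, S.g_symm Z X]

lemma g_smulr (f : F) (X Y : V) : S.g X (f • Y) = f * S.g X Y := by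
  rw [S.g_symm, S.g_smull, S.g_symm]

private def glh (Z : V) : V →+ F :=
  AddMonoidHom.mk' (fun Y => S.g Y Z) (fun a b => S.g_addl a b Z)

private def grh (X : V) : V →+ F := AddMonoidHom.mk' (S.g X) (g_addr S X)

lemma g_zerol (Z : V) : S.g 0 Z = 0 := map_zero (glh S Z)
lemma g_zeror (X : V) : S.g X 0 = 0 := map_zero (grh S X)
lemma g_subl (X Y Z : V) : S.g (X - Y) Z = S.g X Z - S.g Y Z := map_sub (glh S Z) X Y
lemma g_subr (X Y Z : V) : S.g X (Y - Z) = S.g X Y - S.g X Z := map_sub (grh S X) Y Z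
lemma g_negl (X Z : V) : S.g (-X) Z = - S.g X Z := map_neg (glh S Z) X
lemma g_negr (X Z : V) : S.g X (-Z) = - S.g X Z := map_neg (grh S X) Z

private def nabl (hc : IsConnection S nab) (Z : V) : V →+ V :=
  AddMonoidHom.mk' (fun X => nab X Z) (fun a b => hc.addX a b Z)

private def nabr (hc : IsConnection S nab) (X : V) : V →+ V :=
  AddMonoidHom.mk' (nab X) (hc.addY X)

lemma nab_zerol (hc : IsConnection S nab) (Z : V) : nab 0 Z = 0 := map_zero (nabl S nab hc Z)
lemma nab_zeror (hc : IsConnection S nab) (X : V) : nab X 0 = 0 := map_zero (nabr S nab hc X)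
lemma nab_subl (hc : IsConnection S nab) (X Y Z : V) : nab (X - Y) Z = nab X Z - nab Y Z := map_sub (nabl S nab hc Z) X Y
lemma nab_subr (hc : IsConnection S nab) (X Y Z : V) : nab X (Y - Z) = nab X Y - nab X Z := map_sub (nabr S nab hc X) Y Z
lemma nab_negl (hc : IsConnection S nab) (X Z : V) : nab (-X) Z = - nab X Z := map_neg (nabl S nab hc Z) X
lemma nab_negr (hc : IsConnection S nab) (X Z : V) : nab X (-Z) = - nab X Z := map_neg (nabr S nab hc X) Z

lemma br_addr (X Y Z : V) : S.bracket X (Y + Z) = S.bracket X Y + S.bracket X Z := by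
  rw [S.bracket_antisymm, S.bracket_addl, S.bracket_antisymm Y X, S.bracket_antisymm Z X]
  abel

private def brl (Z : V) : V →+ V :=
  AddMonoidHom.mk' (fun X => S.bracket X Z) (fun a b => S.bracket_addl a b Z)

private def brr (X : V) : V →+ V := AddMonoidHom.mk' (S.bracket X) (br_addr S X)

lemma br_zerol (Z : V) : S.bracket 0 Z = 0 := map_zero (brl S Z)
lemma br_zeror (X : V) : S.bracket X 0 = 0 := map_zero (brr S X)
lemma br_subl (X Y Z : V) : S.bracket (X - Y) Z = S.bracket X Z - S.bracket Y Z :=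
  map_sub (brl S Z) X Y
lemma br_subr (X Y Z : V) : S.bracket X (Y - Z) = S.bracket X Y - S.bracket X Z :=
  map_sub (brr S X) Y Z
lemma br_negl (X Z : V) : S.bracket (-X) Z = - S.bracket X Z := map_neg (brl S Z) X
lemma br_negr (X Z : V) : S.bracket X (-Z) = - S.bracket X Z := map_neg (brr S X) Z

lemma jacobi' (A B C : V) :
    S.bracket (S.bracket C A) B
      = -(S.bracket (S.bracket A B) C) - S.bracket (S.bracket B C) A := by
  have h := S.jacobi A B C
  rw [S.bracket_antisymm A (S.bracket B C), S.bracket_antisymm B (S.bracket C A),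
    S.bracket_antisymm C (S.bracket A B)] at h
  have h2 : S.bracket (S.bracket C A) B
      + (S.bracket (S.bracket A B) C + S.bracket (S.bracket B C) A) = 0 := by
    have h3 := congrArg Neg.neg h
    rw [neg_zero] at h3
    rw [← h3]
    abel
  rw [← sub_eq_zero, ← h2]
  abel

lemma bianchi1 (hc : IsConnection S nab) (A B C : V) :
    curv S nab A B C + curv S nab B C A + curv S nab C A B =
      nabTor S nab A B C + nabTor S nab B C A + nabTor S nab C A B
      + tor S nab (tor S nab A B) C + tor S nab (tor S nab B C) A
      + tor S nab (tor S nab C A) B := by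
  simp only [VFCalc.curv, VFCalc.tor, VFCalc.nabTor, nab_subl S nab hc, nab_subr S nab hc,
    br_subl S, br_subr S]
  rw [jacobi' S A B C, S.bracket_antisymm B (nab A C), S.bracket_antisymm C (nab B A),
    S.bracket_antisymm A (nab C B)]
  abel

lemma bianchi2 (hc : IsConnection S nab) (A B C W : V) :
    nab A (curv S nab B C W) - curv S nab (nab A B) C W - curv S nab B (nab A C) W
      - curv S nab B C (nab A W)
    + (nab B (curv S nab C A W) - curv S nab (nab B C) A W - curv S nab C (nab B A) W
      - curv S nab C A (nab B W))
    + (nab C (curv S nab A B W) - curv S nab (nab C A) B W - curv S nab A (nab C B) W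
      - curv S nab A B (nab C W))
    + curv S nab (tor S nab A B) C W
    + curv S nab (tor S nab B C) A W
    + curv S nab (tor S nab C A) B W = 0 := by
  simp only [VFCalc.curv, VFCalc.tor, nab_subl S nab hc, nab_subr S nab hc,
    br_subl S, br_subr S]
  rw [jacobi' S A B C, S.bracket_antisymm B (nab A C), S.bracket_antisymm C (nab B A),
    S.bracket_antisymm A (nab C B)]
  simp only [nab_subl S nab hc, nab_subr S nab hc, nab_negl S nab hc, nab_negr S nab hc,
    br_negl S, br_negr S]
  abel

private def Hh : V →+ V := AddMonoidHom.mk' G.H G.H_add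
private def Vh : V →+ V := AddMonoidHom.mk' G.Vp G.Vp_add

lemma H_zero : G.H 0 = 0 := map_zero (Hh S G)
lemma H_sub (X Y : V) : G.H (X - Y) = G.H X - G.H Y := map_sub (Hh S G) X Y
lemma H_neg (X : V) : G.H (-X) = - G.H X := map_neg (Hh S G) X

lemma Vp_eq_self {X : V} (hX : G.H X = 0) : G.Vp X = X := by
  have h := G.sum_eq X
  rwa [hX, zero_add] at h

lemma H_eq_zero {T : V} (hT : G.Vp T = T) : G.H T = 0 := by
  rw [← hT]
  exact G.H_Vp T

lemma VpVp (X : V) : G.Vp (G.Vp X) = G.Vp X := Vp_eq_self S G (G.H_Vp X)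

lemma g_hv {a b : V} (ha : G.H a = a) (hb : G.H b = 0) : S.g a b = 0 := by
  conv_lhs => rw [← ha, ← Vp_eq_self S G hb]
  exact G.orth a b

lemma g_vh {a b : V} (ha : G.H a = 0) (hb : G.H b = b) : S.g a b = 0 := by
  rw [S.g_symm]
  exact g_hv S G hb ha

lemma half_cancel {a : F} (h : a + a = 0) : a = 0 := by
  have h2 : (2:ℝ) • a = 0 := by rw [two_smul]; exact h
  calc a = ((2:ℝ)⁻¹ * 2) • a := by norm_num
  _ = (2:ℝ)⁻¹ • ((2:ℝ) • a) := by rw [mul_smul]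
  _ = 0 := by rw [h2, smul_zero]

lemma nab_horiz (hcan : IsCanonical S G nab) (A : V) {Y : V} (hY : G.H Y = Y) :
    G.H (nab A Y) = nab A Y := by
  rw [← hcan.parH A Y, hY]

lemma nab_vert (hcan : IsCanonical S G nab) (A : V) {Y : V} (hY : G.H Y = 0) :
    G.H (nab A Y) = 0 := by
  rw [← hcan.parH A Y, hY, nab_zeror S nab hcan.conn]

lemma curv_vert (hcan : IsCanonical S G nab) (A B : V) {C : V} (hC : G.H C = 0) :
    G.H (curv S nab A B C) = 0 := by
  unfold VFCalc.curv
  rw [H_sub S G, H_sub S G, nab_vert S G nab hcan A (nab_vert S G nab hcan B hC),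
    nab_vert S G nab hcan B (nab_vert S G nab hcan A hC),
    nab_vert S G nab hcan (S.bracket A B) hC]
  simp

lemma tor_antisymm (X Y : V) : tor S nab X Y = - tor S nab Y X := by
  unfold VFCalc.tor
  rw [S.bracket_antisymm Y X]
  abel

lemma tor_addl (hc : IsConnection S nab) (X X' Y : V) :
    tor S nab (X + X') Y = tor S nab X Y + tor S nab X' Y := by
  unfold VFCalc.tor
  rw [hc.addX, hc.addY, S.bracket_addl]
  abel

lemma tor_addr (hc : IsConnection S nab) (X Y Y' : V) :
    tor S nab X (Y + Y') = tor S nab X Y + tor S nab X Y' := by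
  unfold VFCalc.tor
  rw [hc.addY, hc.addX, br_addr S]
  abel

lemma tor_hv_g (hcan : IsCanonical S G nab) (hnormal : NormalV S G) {X Y T : V}
    (hX : G.H X = X) (hY : G.H Y = Y) (hT : G.Vp T = T) :
    S.g (tor S nab X T) Y = 0 := by
  have hTz : G.H T = 0 := H_eq_zero S G hT
  have hbXT : S.bracket X T = nab X T - nab T X - tor S nab X T := by
    unfold VFCalc.tor; abel
  have hbYT : S.bracket Y T = nab Y T - nab T Y - tor S nab Y T := by
    unfold VFCalc.tor; abel
  have hn := hnormal X Y T hX hY hT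
  rw [hbXT, hbYT, g_subl S, g_subl S, g_subl S, g_subl S] at hn
  have e1 : S.g (nab X T) Y = 0 := g_vh S G (nab_vert S G nab hcan X hTz) hY
  have e2 : S.g (nab Y T) X = 0 := g_vh S G (nab_vert S G nab hcan Y hTz) hX
  have e3 := hcan.metric T X Y
  have e4 := S.g_symm X (nab T Y)
  have sym := hcan.torSymH X Y T
  rw [hX, hY, hT] at sym
  have key : S.g (tor S nab X T) Y + S.g (tor S nab Y T) X = 0 := by
    linear_combination e3 + e4 - hn + e1 + e2
  rw [← sym] at key
  exact half_cancel key

lemma tor_vv (hcan : IsCanonical S G nab) (hint : IntegrableV S G) {X Y : V}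
    (hX : G.Vp X = X) (hY : G.Vp Y = Y) : tor S nab X Y = 0 := by
  have hXz := H_eq_zero S G hX
  have hYz := H_eq_zero S G hY
  have hH : G.H (tor S nab X Y) = 0 := by
    unfold VFCalc.tor
    have hb := hint X Y
    rw [hX, hY] at hb
    rw [H_sub S G, H_sub S G, nab_vert S G nab hcan X hYz, nab_vert S G nab hcan Y hXz, hb]
    simp
  have hV : G.Vp (tor S nab X Y) = 0 := by
    have h := hcan.torVV X Y
    rwa [hX, hY] at h
  have h := G.sum_eq (tor S nab X Y)
  rw [hH, hV] at h
  simpa using h.symm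

lemma tor_vert {d : ℕ} {E : Fin d → V} (hcan : IsCanonical S G nab) (hnormal : NormalV S G)
    (hint : IntegrableV S G) (hE : IsHFrame S G E) (A B : V) :
    G.H (tor S nab A B) = 0 := by
  have hmix : ∀ P T : V, G.H P = P → G.Vp T = T → G.H (tor S nab P T) = 0 := by
    intro P T hP hT
    set W := tor S nab P T with hW
    have hhor : G.H (G.H W) = G.H W := G.H_H W
    have hz : ∀ i, S.g (G.H W) (E i) = 0 := by
      intro i
      have hVp : S.g (G.Vp W) (E i) = 0 :=
        g_vh S G (G.H_Vp W) (hE.1 i)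
      have hsum : S.g (G.H W) (E i) + S.g (G.Vp W) (E i) = S.g W (E i) := by
        rw [← S.g_addl, G.sum_eq]
      have hzero : S.g W (E i) = 0 := tor_hv_g S G nab hcan hnormal hP (hE.1 i) hT
      rw [hVp, hzero, add_zero] at hsum
      exact hsum
    rw [hE.2.2 (G.H W) hhor]
    apply Finset.sum_eq_zero
    intro i _
    rw [hz i, zero_smul]
  have hda := G.sum_eq A
  have hdb := G.sum_eq B
  have hdec : tor S nab A B
      = tor S nab (G.H A) (G.H B) + tor S nab (G.H A) (G.Vp B)
        + (tor S nab (G.Vp A) (G.H B) + tor S nab (G.Vp A) (G.Vp B)) := by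
    conv_lhs => rw [← hda, ← hdb]
    simp only [tor_addl S nab hcan.conn, tor_addr S nab hcan.conn]
  rw [hdec, tor_antisymm S nab (G.Vp A) (G.H B),
    tor_vv S G nab hcan hint (VpVp S G A) (VpVp S G B)]
  simp [G.H_add, H_neg S G, H_zero S G, hcan.torHH A B,
    hmix (G.H A) (G.Vp B) (G.H_H A) (VpVp S G B),
    hmix (G.H B) (G.Vp A) (G.H_H B) (VpVp S G A)]

lemma nabTor_vert {d : ℕ} {E : Fin d → V} (hcan : IsCanonical S G nab) (hnormal : NormalV S G)
    (hint : IntegrableV S G) (hE : IsHFrame S G E) (A B C : V) :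
    G.H (nabTor S nab A B C) = 0 := by
  unfold VFCalc.nabTor
  rw [H_sub S G, H_sub S G,
    nab_vert S G nab hcan A (tor_vert S G nab hcan hnormal hint hE B C),
    tor_vert S G nab hcan hnormal hint hE, tor_vert S G nab hcan hnormal hint hE]
  simp

lemma br_smull (f : F) (X Y : V) :
    S.bracket (f • X) Y = f • S.bracket X Y - (S.D Y f) • X := by
  rw [S.bracket_antisymm (f • X) Y, S.bracket_leibniz, S.bracket_antisymm Y X]
  module

lemma curv_addl (hc : IsConnection S nab) (A A' B C : V) :
    curv S nab (A + A') B C = curv S nab A B C + curv S nab A' B C := by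
  unfold VFCalc.curv
  rw [hc.addX, hc.addX, hc.addY, S.bracket_addl, hc.addX]
  abel

lemma curv_smull (hc : IsConnection S nab) (f : F) (A B C : V) :
    curv S nab (f • A) B C = f • curv S nab A B C := by
  unfold VFCalc.curv
  rw [br_smull S f A B, nab_subl S nab hc]
  simp only [hc.smulX, hc.leibniz]
  module

lemma curv_swap (hc : IsConnection S nab) (A B C : V) :
    curv S nab A B C = - curv S nab B A C := by
  unfold VFCalc.curv
  rw [S.bracket_antisymm A B, nab_negl S nab hc]
  abel

lemma curv_addm (hc : IsConnection S nab) (A B B' C : V) :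
    curv S nab A (B + B') C = curv S nab A B C + curv S nab A B' C := by
  rw [curv_swap S nab hc A (B + B') C, curv_addl S nab hc, curv_swap S nab hc B A C,
    curv_swap S nab hc B' A C]
  abel

lemma curv_smulm (hc : IsConnection S nab) (f : F) (A B C : V) :
    curv S nab A (f • B) C = f • curv S nab A B C := by
  rw [curv_swap S nab hc A (f • B) C, curv_smull S nab hc, curv_swap S nab hc B A C]
  module

lemma curv_addr (hc : IsConnection S nab) (A B C C' : V) :
    curv S nab A B (C + C') = curv S nab A B C + curv S nab A B C' := by
  unfold VFCalc.curv
  simp only [hc.addY]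
  abel

lemma curv_smulr (hc : IsConnection S nab) (f : F) (A B C : V) :
    curv S nab A B (f • C) = f • curv S nab A B C := by
  unfold VFCalc.curv
  simp only [hc.leibniz, hc.addY]
  rw [S.D_bracket A B f]
  module

lemma rm34 (hcan : IsCanonical S G nab) (A B C D' : V) :
    S.g (curv S nab A B C) D' + S.g (curv S nab A B D') C = 0 := by
  have F1 := S.D_bracket A B (S.g C D')
  have F2 := hcan.metric (S.bracket A B) C D'
  have F3 := hcan.metric B C D'
  have F4 := hcan.metric A C D'
  have F5 := hcan.metric A (nab B C) D'
  have F6 := hcan.metric A C (nab B D')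
  have F7 := hcan.metric B (nab A C) D'
  have F8 := hcan.metric B C (nab A D')
  have F9 := congrArg (S.D A) F3
  rw [S.D_add] at F9
  have F10 := congrArg (S.D B) F4
  rw [S.D_add] at F10
  rw [S.g_symm (curv S nab A B D') C]
  unfold VFCalc.curv
  rw [g_subl S, g_subl S, g_subr S, g_subr S]
  linear_combination F2 - F1 - F5 - F6 + F7 + F8 - F9 + F10

lemma rm34' (hcan : IsCanonical S G nab) (A B C D' : V) :
    S.g (curv S nab A B C) D' = - S.g (curv S nab A B D') C :=
  eq_neg_of_add_eq_zero_left (rm34 S G nab hcan A B C D')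

lemma rm_sym12v {d : ℕ} {E : Fin d → V} (hcan : IsCanonical S G nab) (hnormal : NormalV S G)
    (hint : IntegrableV S G) (hE : IsHFrame S G E) {T : V} (hT : G.H T = 0) (P Q : V)
    {Z : V} (hZ : G.H Z = Z) :
    S.g (curv S nab T P Q) Z = S.g (curv S nab T Q P) Z := by
  have hb := bianchi1 S nab hcan.conn T P Q
  have hg := congrArg (fun v => S.g v Z) hb
  simp only [S.g_addl] at hg
  rw [g_vh S G (curv_vert S G nab hcan P Q hT) hZ,
    g_vh S G (nabTor_vert S G nab hcan hnormal hint hE T P Q) hZ,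
    g_vh S G (nabTor_vert S G nab hcan hnormal hint hE P Q T) hZ,
    g_vh S G (nabTor_vert S G nab hcan hnormal hint hE Q T P) hZ,
    g_vh S G (tor_vert S G nab hcan hnormal hint hE (tor S nab T P) Q) hZ,
    g_vh S G (tor_vert S G nab hcan hnormal hint hE (tor S nab P Q) T) hZ,
    g_vh S G (tor_vert S G nab hcan hnormal hint hE (tor S nab Q T) P) hZ] at hg
  rw [curv_swap S nab hcan.conn Q T P, g_negl S] at hg
  linear_combination hg

lemma rm_vert1 {d : ℕ} {E : Fin d → V} (hcan : IsCanonical S G nab) (hnormal : NormalV S G)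
    (hint : IntegrableV S G) (hE : IsHFrame S G E) {T X Y Z : V} (hT : G.H T = 0)
    (hX : G.H X = X) (hY : G.H Y = Y) (hZ : G.H Z = Z) :
    S.g (curv S nab T X Y) Z = 0 := by
  have s1 := rm_sym12v S G nab hcan hnormal hint hE hT X Y hZ
  have s2 := rm34' S G nab hcan T Y X Z
  have s3 := rm_sym12v S G nab hcan hnormal hint hE hT Y Z hX
  have s4 := rm34' S G nab hcan T Z Y X
  have s5 := rm_sym12v S G nab hcan hnormal hint hE hT Z X hY
  have s6 := rm34' S G nab hcan T X Z Y
  have key : S.g (curv S nab T X Y) Z = - S.g (curv S nab T X Y) Z := by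
    calc S.g (curv S nab T X Y) Z = S.g (curv S nab T Y X) Z := s1
    _ = - S.g (curv S nab T Y Z) X := s2
    _ = - S.g (curv S nab T Z Y) X := by rw [s3]
    _ = S.g (curv S nab T Z X) Y := by rw [s4]; ring
    _ = S.g (curv S nab T X Z) Y := s5
    _ = - S.g (curv S nab T X Y) Z := by rw [s6]
  exact half_cancel (by linear_combination key)

lemma sD_neg (X : V) (f : F) : S.D X (-f) = - S.D X f := map_neg (Dh S X) f

lemma hexp {d : ℕ} {E : Fin d → V} (hE : IsHFrame S G E) (φ : V → F)
    (hadd : ∀ a b, φ (a + b) = φ a + φ b) (hsmul : ∀ (c : F) (a : V), φ (c • a) = c * φ a)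
    {Y : V} (hY : G.H Y = Y) : φ Y = ∑ i, S.g Y (E i) * φ (E i) := by
  classical
  have h0 : φ 0 = 0 := by
    have h := hadd 0 0
    rw [add_zero] at h
    exact left_eq_add.mp h
  have hhom : ∀ (s : Finset (Fin d)) (c : Fin d → F),
      φ (∑ i ∈ s, c i • E i) = ∑ i ∈ s, c i * φ (E i) := by
    intro s c
    induction s using Finset.induction with
    | empty => simpa using h0
    | insert _ _ hni ih =>
        rw [Finset.sum_insert hni, hadd, ih, Finset.sum_insert hni, hsmul]
  conv_lhs => rw [hE.2.2 Y hY]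
  exact hhom Finset.univ _

lemma contr {d : ℕ} {E : Fin d → V} (hcan : IsCanonical S G nab) (hE : IsHFrame S G E)
    (A : V) (φ : V → V → F)
    (h1 : ∀ Y Z, G.H Y = Y → φ Y Z = ∑ i, S.g Y (E i) * φ (E i) Z)
    (h2 : ∀ Y Z, G.H Z = Z → φ Y Z = ∑ i, S.g Z (E i) * φ Y (E i)) :
    (∑ k, (φ (nab A (E k)) (E k) + φ (E k) (nab A (E k)))) = 0 := by
  have hhor : ∀ k, G.H (nab A (E k)) = nab A (E k) := fun k =>
    nab_horiz S G nab hcan A (hE.1 k)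
  have gam : ∀ k i, S.g (nab A (E k)) (E i) + S.g (nab A (E i)) (E k) = 0 := by
    intro k i
    have hm := hcan.metric A (E k) (E i)
    rw [hE.2.1 k i] at hm
    have hz : S.D A (if k = i then (1:F) else 0) = 0 := by
      by_cases h : k = i
      · rw [if_pos h]; exact sD_one S A
      · rw [if_neg h]; exact sD_zero S A
    rw [hz] at hm
    rw [S.g_symm (nab A (E i)) (E k)]
    linear_combination -hm
  have step : ∀ k, φ (nab A (E k)) (E k) + φ (E k) (nab A (E k))
      = (∑ i, S.g (nab A (E k)) (E i) * φ (E i) (E k))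
        + ∑ i, S.g (nab A (E k)) (E i) * φ (E k) (E i) := fun k => by
    rw [← h1 _ _ (hhor k), ← h2 _ _ (hhor k)]
  rw [Finset.sum_congr rfl fun k _ => step k, Finset.sum_add_distrib]
  have swap : (∑ k, ∑ i, S.g (nab A (E k)) (E i) * φ (E k) (E i))
      = ∑ k, ∑ i, S.g (nab A (E i)) (E k) * φ (E i) (E k) := Finset.sum_comm
  rw [swap, ← Finset.sum_add_distrib]
  apply Finset.sum_eq_zero
  intro k _
  rw [← Finset.sum_add_distrib]
  apply Finset.sum_eq_zero
  intro i _
  have h := gam k i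
  have hfac : S.g (nab A (E k)) (E i) * φ (E i) (E k) + S.g (nab A (E i)) (E k) * φ (E i) (E k)
      = (S.g (nab A (E k)) (E i) + S.g (nab A (E i)) (E k)) * φ (E i) (E k) := by ring
  rw [hfac, h, zero_mul]

end SchurAux

open VFCalc in
/-- **Statement 10 (subRiemannian Schur theorem).** On a connected sRC-manifold
whose horizontal bundle bracket generates (so a function annihilated by all
horizontal vector fields is constant), with `dim HM = d > 2` and `VM` normal
and integrable: if `Rc(X,Y) = λ⟨X,Y⟩` for all horizontal `X,Y`, then `λ` is
constant. -/
theorem subriemannian_schur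
    {F : Type*} {V : Type*} [CommRing F] [Algebra ℝ F]
    [AddCommGroup V] [Module F V]
    (S : VFCalc F V) (G : TwoGrading S) (nab : V → V → V)
    (hcan : IsCanonical S G nab)
    (hnormal : NormalV S G) (hint : IntegrableV S G)
    {d : ℕ} (hd : 2 < d) (E : Fin d → V) (hE : IsHFrame S G E)
    (hbracketgen : ∀ f : F, (∀ X, G.H X = X → S.D X f = 0) →
      ∃ c : ℝ, f = algebraMap ℝ F c)
    (lam : F)
    (heinstein : ∀ X Y, G.H X = X → G.H Y = Y →
      Ric S nab E X Y = lam * S.g X Y) :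
    ∃ c : ℝ, lam = algebraMap ℝ F c := by
  classical
  have hc := hcan.conn
  have heq : ∀ Y Z : V, G.H Y = Y → G.H Z = Z →
      (∑ k, S.g (curv S nab Y (E k) (E k)) Z) = lam * S.g Y Z := by
    intro Y Z hY hZ
    have h := heinstein Y Z hY hZ
    simpa [VFCalc.Ric, VFCalc.Rm] using h
  have hP : ∀ Y Z : V, G.H Y = Y → G.H Z = Z →
      (∑ k, S.g (curv S nab (E k) Y (E k)) Z) = -(lam * S.g Y Z) := by
    intro Y Z hY hZ
    have h : ∀ k : Fin d, S.g (curv S nab (E k) Y (E k)) Z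
        = -(S.g (curv S nab Y (E k) (E k)) Z) := fun k => by
      rw [curv_swap S nab hc (E k) Y (E k), g_negl S]
    rw [Finset.sum_congr rfl fun k _ => h k, Finset.sum_neg_distrib, heq Y Z hY hZ]
  have hQ : ∀ Y Z : V, G.H Y = Y → G.H Z = Z →
      (∑ j, S.g (curv S nab Y (E j) Z) (E j)) = -(lam * S.g Y Z) := by
    intro Y Z hY hZ
    have h : ∀ j : Fin d, S.g (curv S nab Y (E j) Z) (E j)
        = -(S.g (curv S nab Y (E j) (E j)) Z) := fun j => rm34' S G nab hcan Y (E j) Z (E j)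
    rw [Finset.sum_congr rfl fun j _ => h j, Finset.sum_neg_distrib, heq Y Z hY hZ]
  have key : ∀ i : Fin d, S.D (E i) lam = 0 := by
    intro i
    have hX : G.H (E i) = E i := hE.1 i
    have hcontr23 : ∀ j : Fin d,
        (∑ k, (S.g (curv S nab (E j) (nab (E i) (E k)) (E k)) (E j)
          + S.g (curv S nab (E j) (E k) (nab (E i) (E k))) (E j))) = 0 := fun j =>
      contr S G nab hcan hE (E i) (fun Y Z => S.g (curv S nab (E j) Y Z) (E j))
        (fun Y Z hY => hexp S G hE (fun W => S.g (curv S nab (E j) W Z) (E j))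
          (fun a b => by simp only [curv_addm S nab hc, S.g_addl])
          (fun c a => by simp only [curv_smulm S nab hc, S.g_smull]) hY)
        (fun Y Z hZ => hexp S G hE (fun W => S.g (curv S nab (E j) Y W) (E j))
          (fun a b => by simp only [curv_addr S nab hc, S.g_addl])
          (fun c a => by simp only [curv_smulr S nab hc, S.g_smull]) hZ)
    have hcontr14 : ∀ k : Fin d,
        (∑ j, (S.g (curv S nab (nab (E i) (E j)) (E k) (E k)) (E j)
          + S.g (curv S nab (E j) (E k) (E k)) (nab (E i) (E j)))) = 0 := fun k =>
      contr S G nab hcan hE (E i) (fun Y Z => S.g (curv S nab Y (E k) (E k)) Z)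
        (fun Y Z hY => hexp S G hE (fun W => S.g (curv S nab W (E k) (E k)) Z)
          (fun a b => by simp only [curv_addl S nab hc, S.g_addl])
          (fun c a => by simp only [curv_smull S nab hc, S.g_smull]) hY)
        (fun Y Z hZ => hexp S G hE (fun W => S.g (curv S nab Y (E k) (E k)) W)
          (fun a b => g_addr S _ a b)
          (fun c a => g_smulr S c _ a) hZ)
    have hcontr13 : ∀ j : Fin d,
        (∑ k, (S.g (curv S nab (nab (E j) (E k)) (E i) (E k)) (E j)
          + S.g (curv S nab (E k) (E i) (nab (E j) (E k))) (E j))) = 0 := fun j =>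
      contr S G nab hcan hE (E j) (fun Y Z => S.g (curv S nab Y (E i) Z) (E j))
        (fun Y Z hY => hexp S G hE (fun W => S.g (curv S nab W (E i) Z) (E j))
          (fun a b => by simp only [curv_addl S nab hc, S.g_addl])
          (fun c a => by simp only [curv_smull S nab hc, S.g_smull]) hY)
        (fun Y Z hZ => hexp S G hE (fun W => S.g (curv S nab Y (E i) W) (E j))
          (fun a b => by simp only [curv_addr S nab hc, S.g_addl])
          (fun c a => by simp only [curv_smulr S nab hc, S.g_smull]) hZ)
    have hcontr24 : ∀ k : Fin d,
        (∑ j, (S.g (curv S nab (E i) (nab (E k) (E j)) (E k)) (E j)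
          + S.g (curv S nab (E i) (E j) (E k)) (nab (E k) (E j)))) = 0 := fun k =>
      contr S G nab hcan hE (E k) (fun Y Z => S.g (curv S nab (E i) Y (E k)) Z)
        (fun Y Z hY => hexp S G hE (fun W => S.g (curv S nab (E i) W (E k)) Z)
          (fun a b => by simp only [curv_addm S nab hc, S.g_addl])
          (fun c a => by simp only [curv_smulm S nab hc, S.g_smull]) hY)
        (fun Y Z hZ => hexp S G hE (fun W => S.g (curv S nab (E i) Y (E k)) W)
          (fun a b => g_addr S _ a b)
          (fun c a => g_smulr S c _ a) hZ)
    have hS1 : (∑ j, ∑ k, (S.g (nab (E i) (curv S nab (E j) (E k) (E k))) (E j)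
        - S.g (curv S nab (nab (E i) (E j)) (E k) (E k)) (E j)
        - S.g (curv S nab (E j) (nab (E i) (E k)) (E k)) (E j)
        - S.g (curv S nab (E j) (E k) (nab (E i) (E k))) (E j)))
        = (d : ℕ) • S.D (E i) lam := by
      have step : ∀ j : Fin d, (∑ k, (S.g (nab (E i) (curv S nab (E j) (E k) (E k))) (E j)
          - S.g (curv S nab (nab (E i) (E j)) (E k) (E k)) (E j)
          - S.g (curv S nab (E j) (nab (E i) (E k)) (E k)) (E j)
          - S.g (curv S nab (E j) (E k) (nab (E i) (E k))) (E j)))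
          = (∑ k, S.D (E i) (S.g (curv S nab (E j) (E k) (E k)) (E j)))
            - ∑ k, (S.g (curv S nab (nab (E i) (E j)) (E k) (E k)) (E j)
              + S.g (curv S nab (E j) (E k) (E k)) (nab (E i) (E j))) := by
        intro j
        calc (∑ k, (S.g (nab (E i) (curv S nab (E j) (E k) (E k))) (E j)
            - S.g (curv S nab (nab (E i) (E j)) (E k) (E k)) (E j)
            - S.g (curv S nab (E j) (nab (E i) (E k)) (E k)) (E j)
            - S.g (curv S nab (E j) (E k) (nab (E i) (E k))) (E j)))
            = ∑ k, ((S.D (E i) (S.g (curv S nab (E j) (E k) (E k)) (E j))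
                - (S.g (curv S nab (nab (E i) (E j)) (E k) (E k)) (E j)
                  + S.g (curv S nab (E j) (E k) (E k)) (nab (E i) (E j))))
                - (S.g (curv S nab (E j) (nab (E i) (E k)) (E k)) (E j)
                  + S.g (curv S nab (E j) (E k) (nab (E i) (E k))) (E j))) :=
              Finset.sum_congr rfl fun k _ => by
                have hm := hcan.metric (E i) (curv S nab (E j) (E k) (E k)) (E j)
                linear_combination -hm
          _ = (∑ k, (S.D (E i) (S.g (curv S nab (E j) (E k) (E k)) (E j))
                - (S.g (curv S nab (nab (E i) (E j)) (E k) (E k)) (E j)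
                  + S.g (curv S nab (E j) (E k) (E k)) (nab (E i) (E j)))))
              - ∑ k, (S.g (curv S nab (E j) (nab (E i) (E k)) (E k)) (E j)
                  + S.g (curv S nab (E j) (E k) (nab (E i) (E k))) (E j)) :=
              Finset.sum_sub_distrib _ _
          _ = ∑ k, (S.D (E i) (S.g (curv S nab (E j) (E k) (E k)) (E j))
                - (S.g (curv S nab (nab (E i) (E j)) (E k) (E k)) (E j)
                  + S.g (curv S nab (E j) (E k) (E k)) (nab (E i) (E j)))) := by
              rw [hcontr23 j, sub_zero]
          _ = (∑ k, S.D (E i) (S.g (curv S nab (E j) (E k) (E k)) (E j)))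
              - ∑ k, (S.g (curv S nab (nab (E i) (E j)) (E k) (E k)) (E j)
                + S.g (curv S nab (E j) (E k) (E k)) (nab (E i) (E j))) :=
              Finset.sum_sub_distrib _ _
      calc (∑ j, ∑ k, (S.g (nab (E i) (curv S nab (E j) (E k) (E k))) (E j)
          - S.g (curv S nab (nab (E i) (E j)) (E k) (E k)) (E j)
          - S.g (curv S nab (E j) (nab (E i) (E k)) (E k)) (E j)
          - S.g (curv S nab (E j) (E k) (nab (E i) (E k))) (E j)))
          = ∑ j, ((∑ k, S.D (E i) (S.g (curv S nab (E j) (E k) (E k)) (E j)))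
            - ∑ k, (S.g (curv S nab (nab (E i) (E j)) (E k) (E k)) (E j)
              + S.g (curv S nab (E j) (E k) (E k)) (nab (E i) (E j)))) :=
            Finset.sum_congr rfl fun j _ => step j
        _ = (∑ j, ∑ k, S.D (E i) (S.g (curv S nab (E j) (E k) (E k)) (E j)))
            - ∑ j, ∑ k, (S.g (curv S nab (nab (E i) (E j)) (E k) (E k)) (E j)
              + S.g (curv S nab (E j) (E k) (E k)) (nab (E i) (E j))) :=
            Finset.sum_sub_distrib _ _
        _ = ∑ j, ∑ k, S.D (E i) (S.g (curv S nab (E j) (E k) (E k)) (E j)) := by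
            rw [show (∑ j, ∑ k, (S.g (curv S nab (nab (E i) (E j)) (E k) (E k)) (E j)
              + S.g (curv S nab (E j) (E k) (E k)) (nab (E i) (E j))))
              = ∑ k, ∑ j, (S.g (curv S nab (nab (E i) (E j)) (E k) (E k)) (E j)
              + S.g (curv S nab (E j) (E k) (E k)) (nab (E i) (E j))) from Finset.sum_comm,
              Finset.sum_eq_zero fun k _ => hcontr14 k, sub_zero]
        _ = ∑ j, S.D (E i) (∑ k, S.g (curv S nab (E j) (E k) (E k)) (E j)) :=
            Finset.sum_congr rfl fun j _ =>
              (sD_sum S Finset.univ (fun k => S.g (curv S nab (E j) (E k) (E k)) (E j)) (E i)).symm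
        _ = S.D (E i) (∑ j, ∑ k, S.g (curv S nab (E j) (E k) (E k)) (E j)) :=
            (sD_sum S Finset.univ (fun j => ∑ k, S.g (curv S nab (E j) (E k) (E k)) (E j)) (E i)).symm
        _ = S.D (E i) ((d : ℕ) • lam) := by
            congr 1
            calc (∑ j, ∑ k, S.g (curv S nab (E j) (E k) (E k)) (E j))
                = ∑ j, (lam * S.g (E j) (E j)) :=
                  Finset.sum_congr rfl fun j _ => heq (E j) (E j) (hE.1 j) (hE.1 j)
              _ = ∑ _j : Fin d, lam := by
                  refine Finset.sum_congr rfl fun j _ => ?_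
                  rw [hE.2.1 j j, if_pos rfl, mul_one]
              _ = (d : ℕ) • lam := by
                  rw [Finset.sum_const, Finset.card_univ, Fintype.card_fin]
        _ = (d : ℕ) • S.D (E i) lam := sD_nsmul S (E i) d lam
    have hS2 : (∑ j, ∑ k, (S.g (nab (E j) (curv S nab (E k) (E i) (E k))) (E j)
        - S.g (curv S nab (nab (E j) (E k)) (E i) (E k)) (E j)
        - S.g (curv S nab (E k) (nab (E j) (E i)) (E k)) (E j)
        - S.g (curv S nab (E k) (E i) (nab (E j) (E k))) (E j)))
        = -(S.D (E i) lam) := by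
      have step : ∀ j : Fin d, (∑ k, (S.g (nab (E j) (curv S nab (E k) (E i) (E k))) (E j)
          - S.g (curv S nab (nab (E j) (E k)) (E i) (E k)) (E j)
          - S.g (curv S nab (E k) (nab (E j) (E i)) (E k)) (E j)
          - S.g (curv S nab (E k) (E i) (nab (E j) (E k))) (E j)))
          = -(S.g (E i) (E j) * S.D (E j) lam) := by
        intro j
        have hEj := hE.1 j
        have hnx : G.H (nab (E j) (E i)) = nab (E j) (E i) := nab_horiz S G nab hcan (E j) hX
        have hnj : G.H (nab (E j) (E j)) = nab (E j) (E j) := nab_horiz S G nab hcan (E j) hEj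
        calc (∑ k, (S.g (nab (E j) (curv S nab (E k) (E i) (E k))) (E j)
            - S.g (curv S nab (nab (E j) (E k)) (E i) (E k)) (E j)
            - S.g (curv S nab (E k) (nab (E j) (E i)) (E k)) (E j)
            - S.g (curv S nab (E k) (E i) (nab (E j) (E k))) (E j)))
            = ∑ k, ((S.D (E j) (S.g (curv S nab (E k) (E i) (E k)) (E j))
                - S.g (curv S nab (E k) (E i) (E k)) (nab (E j) (E j))
                - S.g (curv S nab (E k) (nab (E j) (E i)) (E k)) (E j))
                - (S.g (curv S nab (nab (E j) (E k)) (E i) (E k)) (E j)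
                  + S.g (curv S nab (E k) (E i) (nab (E j) (E k))) (E j))) :=
              Finset.sum_congr rfl fun k _ => by
                have hm := hcan.metric (E j) (curv S nab (E k) (E i) (E k)) (E j)
                linear_combination -hm
          _ = (∑ k, (S.D (E j) (S.g (curv S nab (E k) (E i) (E k)) (E j))
                - S.g (curv S nab (E k) (E i) (E k)) (nab (E j) (E j))
                - S.g (curv S nab (E k) (nab (E j) (E i)) (E k)) (E j)))
              - ∑ k, (S.g (curv S nab (nab (E j) (E k)) (E i) (E k)) (E j)
                  + S.g (curv S nab (E k) (E i) (nab (E j) (E k))) (E j)) :=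
              Finset.sum_sub_distrib _ _
          _ = ∑ k, (S.D (E j) (S.g (curv S nab (E k) (E i) (E k)) (E j))
                - S.g (curv S nab (E k) (E i) (E k)) (nab (E j) (E j))
                - S.g (curv S nab (E k) (nab (E j) (E i)) (E k)) (E j)) := by
              rw [hcontr13 j, sub_zero]
          _ = (∑ k, S.D (E j) (S.g (curv S nab (E k) (E i) (E k)) (E j)))
              - (∑ k, S.g (curv S nab (E k) (E i) (E k)) (nab (E j) (E j)))
              - ∑ k, S.g (curv S nab (E k) (nab (E j) (E i)) (E k)) (E j) := by
              rw [Finset.sum_sub_distrib, Finset.sum_sub_distrib]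
          _ = S.D (E j) (-(lam * S.g (E i) (E j)))
              - (-(lam * S.g (E i) (nab (E j) (E j))))
              - (-(lam * S.g (nab (E j) (E i)) (E j))) := by
              rw [← sD_sum S, hP (E i) (E j) hX hEj, hP (E i) (nab (E j) (E j)) hX hnj,
                hP (nab (E j) (E i)) (E j) hnx hEj]
          _ = -(S.g (E i) (E j) * S.D (E j) lam) := by
              have hm2 := hcan.metric (E j) (E i) (E j)
              rw [sD_neg S, S.D_mul]
              linear_combination (-lam) * hm2
      calc (∑ j, ∑ k, (S.g (nab (E j) (curv S nab (E k) (E i) (E k))) (E j)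
          - S.g (curv S nab (nab (E j) (E k)) (E i) (E k)) (E j)
          - S.g (curv S nab (E k) (nab (E j) (E i)) (E k)) (E j)
          - S.g (curv S nab (E k) (E i) (nab (E j) (E k))) (E j)))
          = ∑ j, -(S.g (E i) (E j) * S.D (E j) lam) :=
            Finset.sum_congr rfl fun j _ => step j
        _ = ∑ j, (if i = j then -(S.D (E j) lam) else 0) := by
            refine Finset.sum_congr rfl fun j _ => ?_
            rw [hE.2.1 i j]
            split <;> ring
        _ = -(S.D (E i) lam) := by rw [Finset.sum_ite_eq]; simp
    have hS3 : (∑ j, ∑ k, (S.g (nab (E k) (curv S nab (E i) (E j) (E k))) (E j)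
        - S.g (curv S nab (nab (E k) (E i)) (E j) (E k)) (E j)
        - S.g (curv S nab (E i) (nab (E k) (E j)) (E k)) (E j)
        - S.g (curv S nab (E i) (E j) (nab (E k) (E k))) (E j)))
        = -(S.D (E i) lam) := by
      rw [show (∑ j, ∑ k, (S.g (nab (E k) (curv S nab (E i) (E j) (E k))) (E j)
        - S.g (curv S nab (nab (E k) (E i)) (E j) (E k)) (E j)
        - S.g (curv S nab (E i) (nab (E k) (E j)) (E k)) (E j)
        - S.g (curv S nab (E i) (E j) (nab (E k) (E k))) (E j)))
        = ∑ k, ∑ j, (S.g (nab (E k) (curv S nab (E i) (E j) (E k))) (E j)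
        - S.g (curv S nab (nab (E k) (E i)) (E j) (E k)) (E j)
        - S.g (curv S nab (E i) (nab (E k) (E j)) (E k)) (E j)
        - S.g (curv S nab (E i) (E j) (nab (E k) (E k))) (E j)) from Finset.sum_comm]
      have step : ∀ k : Fin d, (∑ j, (S.g (nab (E k) (curv S nab (E i) (E j) (E k))) (E j)
          - S.g (curv S nab (nab (E k) (E i)) (E j) (E k)) (E j)
          - S.g (curv S nab (E i) (nab (E k) (E j)) (E k)) (E j)
          - S.g (curv S nab (E i) (E j) (nab (E k) (E k))) (E j)))
          = -(S.g (E i) (E k) * S.D (E k) lam) := by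
        intro k
        have hEk := hE.1 k
        have hnx : G.H (nab (E k) (E i)) = nab (E k) (E i) := nab_horiz S G nab hcan (E k) hX
        have hnk : G.H (nab (E k) (E k)) = nab (E k) (E k) := nab_horiz S G nab hcan (E k) hEk
        calc (∑ j, (S.g (nab (E k) (curv S nab (E i) (E j) (E k))) (E j)
            - S.g (curv S nab (nab (E k) (E i)) (E j) (E k)) (E j)
            - S.g (curv S nab (E i) (nab (E k) (E j)) (E k)) (E j)
            - S.g (curv S nab (E i) (E j) (nab (E k) (E k))) (E j)))
            = ∑ j, ((S.D (E k) (S.g (curv S nab (E i) (E j) (E k)) (E j))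
                - S.g (curv S nab (nab (E k) (E i)) (E j) (E k)) (E j)
                - S.g (curv S nab (E i) (E j) (nab (E k) (E k))) (E j))
                - (S.g (curv S nab (E i) (nab (E k) (E j)) (E k)) (E j)
                  + S.g (curv S nab (E i) (E j) (E k)) (nab (E k) (E j)))) :=
              Finset.sum_congr rfl fun j _ => by
                have hm := hcan.metric (E k) (curv S nab (E i) (E j) (E k)) (E j)
                linear_combination -hm
          _ = (∑ j, (S.D (E k) (S.g (curv S nab (E i) (E j) (E k)) (E j))
                - S.g (curv S nab (nab (E k) (E i)) (E j) (E k)) (E j)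
                - S.g (curv S nab (E i) (E j) (nab (E k) (E k))) (E j)))
              - ∑ j, (S.g (curv S nab (E i) (nab (E k) (E j)) (E k)) (E j)
                  + S.g (curv S nab (E i) (E j) (E k)) (nab (E k) (E j))) :=
              Finset.sum_sub_distrib _ _
          _ = ∑ j, (S.D (E k) (S.g (curv S nab (E i) (E j) (E k)) (E j))
                - S.g (curv S nab (nab (E k) (E i)) (E j) (E k)) (E j)
                - S.g (curv S nab (E i) (E j) (nab (E k) (E k))) (E j)) := by
              rw [hcontr24 k, sub_zero]
          _ = (∑ j, S.D (E k) (S.g (curv S nab (E i) (E j) (E k)) (E j)))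
              - (∑ j, S.g (curv S nab (nab (E k) (E i)) (E j) (E k)) (E j))
              - ∑ j, S.g (curv S nab (E i) (E j) (nab (E k) (E k))) (E j) := by
              rw [Finset.sum_sub_distrib, Finset.sum_sub_distrib]
          _ = S.D (E k) (-(lam * S.g (E i) (E k)))
              - (-(lam * S.g (nab (E k) (E i)) (E k)))
              - (-(lam * S.g (E i) (nab (E k) (E k)))) := by
              rw [← sD_sum S, hQ (E i) (E k) hX hEk, hQ (nab (E k) (E i)) (E k) hnx hEk,
                hQ (E i) (nab (E k) (E k)) hX hnk]
          _ = -(S.g (E i) (E k) * S.D (E k) lam) := by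
              have hm2 := hcan.metric (E k) (E i) (E k)
              rw [sD_neg S, S.D_mul]
              linear_combination (-lam) * hm2
      calc (∑ k, ∑ j, (S.g (nab (E k) (curv S nab (E i) (E j) (E k))) (E j)
          - S.g (curv S nab (nab (E k) (E i)) (E j) (E k)) (E j)
          - S.g (curv S nab (E i) (nab (E k) (E j)) (E k)) (E j)
          - S.g (curv S nab (E i) (E j) (nab (E k) (E k))) (E j)))
          = ∑ k, -(S.g (E i) (E k) * S.D (E k) lam) :=
            Finset.sum_congr rfl fun k _ => step k
        _ = ∑ k, (if i = k then -(S.D (E k) lam) else 0) := by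
            refine Finset.sum_congr rfl fun k _ => ?_
            rw [hE.2.1 i k]
            split <;> ring
        _ = -(S.D (E i) lam) := by rw [Finset.sum_ite_eq]; simp
    have hS4 : (∑ j, ∑ k, S.g (curv S nab (tor S nab (E i) (E j)) (E k) (E k)) (E j)) = 0 :=
      Finset.sum_eq_zero fun j _ => Finset.sum_eq_zero fun k _ =>
        rm_vert1 S G nab hcan hnormal hint hE
          (tor_vert S G nab hcan hnormal hint hE (E i) (E j)) (hE.1 k) (hE.1 k) (hE.1 j)
    have hS5 : (∑ j, ∑ k, S.g (curv S nab (tor S nab (E j) (E k)) (E i) (E k)) (E j)) = 0 :=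
      Finset.sum_eq_zero fun j _ => Finset.sum_eq_zero fun k _ =>
        rm_vert1 S G nab hcan hnormal hint hE
          (tor_vert S G nab hcan hnormal hint hE (E j) (E k)) (hE.1 i) (hE.1 k) (hE.1 j)
    have hS6 : (∑ j, ∑ k, S.g (curv S nab (tor S nab (E k) (E i)) (E j) (E k)) (E j)) = 0 :=
      Finset.sum_eq_zero fun j _ => Finset.sum_eq_zero fun k _ =>
        rm_vert1 S G nab hcan hnormal hint hE
          (tor_vert S G nab hcan hnormal hint hE (E k) (E i)) (hE.1 j) (hE.1 k) (hE.1 j)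
    have total : (∑ j, ∑ k, (S.g (nab (E i) (curv S nab (E j) (E k) (E k))) (E j)
        - S.g (curv S nab (nab (E i) (E j)) (E k) (E k)) (E j)
        - S.g (curv S nab (E j) (nab (E i) (E k)) (E k)) (E j)
        - S.g (curv S nab (E j) (E k) (nab (E i) (E k))) (E j)))
        + (∑ j, ∑ k, (S.g (nab (E j) (curv S nab (E k) (E i) (E k))) (E j)
        - S.g (curv S nab (nab (E j) (E k)) (E i) (E k)) (E j)
        - S.g (curv S nab (E k) (nab (E j) (E i)) (E k)) (E j)
        - S.g (curv S nab (E k) (E i) (nab (E j) (E k))) (E j)))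
        + (∑ j, ∑ k, (S.g (nab (E k) (curv S nab (E i) (E j) (E k))) (E j)
        - S.g (curv S nab (nab (E k) (E i)) (E j) (E k)) (E j)
        - S.g (curv S nab (E i) (nab (E k) (E j)) (E k)) (E j)
        - S.g (curv S nab (E i) (E j) (nab (E k) (E k))) (E j)))
        + (∑ j, ∑ k, S.g (curv S nab (tor S nab (E i) (E j)) (E k) (E k)) (E j))
        + (∑ j, ∑ k, S.g (curv S nab (tor S nab (E j) (E k)) (E i) (E k)) (E j))
        + (∑ j, ∑ k, S.g (curv S nab (tor S nab (E k) (E i)) (E j) (E k)) (E j)) = 0 := by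
      simp only [← Finset.sum_add_distrib]
      refine Finset.sum_eq_zero fun j _ => ?_
      refine Finset.sum_eq_zero fun k _ => ?_
      have hb := bianchi2 S nab hc (E i) (E j) (E k) (E k)
      have hg := congrArg (fun v => S.g v (E j)) hb
      simp only [S.g_addl, g_subl S, g_zerol S] at hg
      linear_combination hg
    rw [hS1, hS2, hS3, hS4, hS5, hS6] at total
    have hfin : ((d : F) - 2) * S.D (E i) lam = 0 := by
      rw [nsmul_eq_mul] at total
      linear_combination total
    have hne : ((d : ℝ) - 2) ≠ 0 := by
      have : (2 : ℝ) < (d : ℝ) := by exact_mod_cast hd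
      linarith
    have h5 : ((d : ℝ) - 2) • S.D (E i) lam = 0 := by
      rw [Algebra.smul_def, map_sub, map_natCast, map_ofNat]
      exact hfin
    calc S.D (E i) lam = (((d : ℝ) - 2)⁻¹ * ((d : ℝ) - 2)) • S.D (E i) lam := by
          rw [inv_mul_cancel₀ hne, one_smul]
      _ = ((d : ℝ) - 2)⁻¹ • (((d : ℝ) - 2) • S.D (E i) lam) := mul_smul _ _ _
      _ = 0 := by rw [h5, smul_zero]
  apply hbracketgen lam
  intro X hXh
  rw [show S.D X lam = ∑ i, S.g X (E i) * S.D (E i) lam from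
    hexp S G hE (fun Y => S.D Y lam) (fun a b => S.D_addX a b lam)
      (fun c a => S.D_smulX c a lam) hXh]
  exact Finset.sum_eq_zero fun i _ => by rw [key i, mul_zero]
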